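/- arXiv:2402.09103 — 3 statements merged into one kernel-verified Lean document; each statement's English description precedes it below -/
import Mathlib

section
/- Let ∇ = ∑_{i=1}^n ∂/∂v_i act on ℤ[v_1,…,v_n]. Then the kernel of ∇ on ℤ[v_1,…,v_n] equals the subring ℤ[v_1 - v_n, v_2 - v_n, …, v_{n-1} - v_n]. -/
open MvPolynomial

section aux

variable {σ : Type*} [DecidableEq σ]

lemma my_coeff_pderiv (i : σ) (f : MvPolynomial σ ℤ) (e : σ →₀ ℕ) :
    coeff e (pderiv i f) = ((e i : ℤ) + 1) * coeff (e + Finsupp.single i 1) f := by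
  induction f using MvPolynomial.induction_on' with
  | monomial s a =>
    rw [pderiv_monomial, coeff_monomial, coeff_monomial]
    split_ifs with h1 h2 h2
    · subst h2
      simp only [Finsupp.add_apply, Finsupp.single_apply, if_pos rfl]
      push_cast; ring
    · have hsi : s i = 0 := by
        by_contra hsi
        apply h2
        rw [← h1]
        ext j
        simp only [Finsupp.add_apply, Finsupp.tsub_apply, Finsupp.single_apply]
        rcases eq_or_ne i j with rfl | hj
        · simp; omega
        · simp [hj]
      simp [hsi]
    · exfalso; apply h1; subst h2; exact add_tsub_cancel_right _ _
    · simp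
  | add p q hp hq =>
    simp only [map_add, coeff_add, hp, hq]; ring

lemma my_pderiv_eq_zero_iff (i : σ) (f : MvPolynomial σ ℤ) :
    pderiv i f = 0 ↔ i ∉ f.vars := by
  constructor
  · intro h hmem
    rw [mem_vars] at hmem
    obtain ⟨d, hd, hid⟩ := hmem
    have hdi : d i ≠ 0 := Finsupp.mem_support_iff.mp hid
    have h0 : coeff (d - Finsupp.single i 1) (pderiv i f) = 0 := by rw [h]; simp
    rw [my_coeff_pderiv] at h0
    have hd' : (d - Finsupp.single i 1) + Finsupp.single i 1 = d := by
      ext j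
      simp only [Finsupp.add_apply, Finsupp.tsub_apply, Finsupp.single_apply]
      rcases eq_or_ne i j with rfl | hj
      · simp; omega
      · simp [hj]
    rw [hd'] at h0
    have hc : coeff d f ≠ 0 := mem_support_iff.mp hd
    have hpos : ∀ m : ℕ, ((m : ℤ) + 1) ≠ 0 := fun m => by positivity
    exact hc ((mul_eq_zero.mp h0).resolve_left (hpos _))
  · exact pderiv_eq_zero_of_notMem_vars

variable [Fintype σ]

noncomputable def psiM (i : σ) : MvPolynomial σ ℤ →ₐ[ℤ] MvPolynomial σ ℤ :=
  aeval (fun j => if j = i then X i else X j - X i)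

noncomputable def phiM (i : σ) : MvPolynomial σ ℤ →ₐ[ℤ] MvPolynomial σ ℤ :=
  aeval (fun j => if j = i then X i else X j + X i)

lemma psiM_X (i j : σ) : psiM i (X j) = if j = i then X i else X j - X i := by
  simp [psiM]

lemma phiM_X (i j : σ) : phiM i (X j) = if j = i then X i else X j + X i := by
  simp [phiM]

lemma psiM_phiM (i : σ) (f : MvPolynomial σ ℤ) : psiM i (phiM i f) = f := by
  have : (psiM i).comp (phiM i) = AlgHom.id ℤ _ := by
    apply MvPolynomial.algHom_ext
    intro j
    rcases eq_or_ne j i with rfl | h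
    · simp [psiM_X, phiM_X, AlgHom.comp_apply]
    · simp [AlgHom.comp_apply, phiM_X, psiM_X, h, sub_add_cancel]
  exact DFunLike.congr_fun this f

lemma phiM_psiM (i : σ) (f : MvPolynomial σ ℤ) : phiM i (psiM i f) = f := by
  have : (phiM i).comp (psiM i) = AlgHom.id ℤ _ := by
    apply MvPolynomial.algHom_ext
    intro j
    rcases eq_or_ne j i with rfl | h
    · simp [psiM_X, phiM_X, AlgHom.comp_apply]
    · simp [AlgHom.comp_apply, phiM_X, psiM_X, h, add_sub_cancel_right]
  exact DFunLike.congr_fun this f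

lemma sum_pderiv_X' (i j : σ) :
    (∑ k : σ, pderiv k (psiM i (X j) : MvPolynomial σ ℤ)) = if j = i then 1 else 0 := by
  rw [psiM_X]
  split_ifs with h
  · rw [Finset.sum_eq_single i]
    · exact pderiv_X_self i
    · intro k _ hk; exact pderiv_X_of_ne (Ne.symm hk)
    · simp
  · have : ∀ k : σ, pderiv k ((X j - X i : MvPolynomial σ ℤ)) =
        (if k = j then 1 else 0) - (if k = i then 1 else 0) := by
      intro k
      rw [map_sub]
      congr 1
      · rcases eq_or_ne k j with rfl | hk
        · simp [pderiv_X_self]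
        · simp [pderiv_X_of_ne (Ne.symm hk), hk]
      · rcases eq_or_ne k i with rfl | hk
        · simp [pderiv_X_self]
        · simp [pderiv_X_of_ne (Ne.symm hk), hk]
    simp [this, Finset.sum_sub_distrib]

lemma sum_pderiv_psiM (i : σ) (g : MvPolynomial σ ℤ) :
    (∑ j : σ, pderiv j (psiM i g)) = psiM i (pderiv i g) := by
  induction g using MvPolynomial.induction_on with
  | C a => simp [psiM]
  | add p q hp hq => simp [map_add, hp, hq, Finset.sum_add_distrib]
  | mul_X p j hp =>
    have hX : pderiv i (X j : MvPolynomial σ ℤ) = if j = i then 1 else 0 := by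
      rcases eq_or_ne j i with rfl | h
      · simp [pderiv_X_self]
      · simp [pderiv_X_of_ne h, h]
    rw [map_mul, pderiv_mul, map_add, map_mul, map_mul, hX]
    simp only [pderiv_mul, Finset.sum_add_distrib, ← Finset.sum_mul, ← Finset.mul_sum, hp,
      sum_pderiv_X']
    split_ifs <;> simp

end aux

/-- The kernel of the formal divergence `∇ = ∑ᵢ ∂/∂vᵢ` on `ℤ[v₁,…,vₙ]` is exactly the
subring `ℤ[v₁ - vₙ, …, v_{n-1} - vₙ]`. -/
theorem stmt_4 (n : ℕ) (hn : 0 < n) (f : MvPolynomial (Fin n) ℤ) :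
    (∑ i : Fin n, pderiv i f) = 0 ↔
      f ∈ Algebra.adjoin ℤ
        (Set.range fun i : Fin n => (X i : MvPolynomial (Fin n) ℤ) - X ⟨n - 1, by omega⟩) := by
  set i : Fin n := ⟨n - 1, by omega⟩ with hi
  have key := sum_pderiv_psiM i (phiM i f)
  rw [psiM_phiM] at key
  have hinj : Function.Injective (psiM (σ := Fin n) i) :=
    Function.LeftInverse.injective (g := phiM i) (phiM_psiM i)
  constructor
  · intro h
    have h0 : pderiv i (phiM i f) = 0 := by
      apply hinj
      rw [map_zero, ← key, h]
    have hv : phiM i f ∈ supported ℤ ({i}ᶜ : Set (Fin n)) := by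
      rw [mem_supported]
      intro j hj
      rcases eq_or_ne j i with rfl | hne
      · exact absurd hj ((my_pderiv_eq_zero_iff i _).mp h0)
      · exact hne
    have : f ∈ Algebra.adjoin ℤ (psiM i '' (X '' ({i}ᶜ : Set (Fin n)))) := by
      rw [Algebra.adjoin_image]
      exact ⟨phiM i f, hv, psiM_phiM i f⟩
    refine Algebra.adjoin_mono ?_ this
    rintro _ ⟨_, ⟨j, hj, rfl⟩, rfl⟩
    have hj' : j ≠ i := hj
    exact ⟨j, by simp [psiM_X, hj']⟩
  · intro h
    suffices h0 : pderiv i (phiM i f) = 0 by rw [key, h0, map_zero]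
    rw [my_pderiv_eq_zero_iff]
    intro hmem
    have hv : phiM i f ∈ supported ℤ ({i}ᶜ : Set (Fin n)) := by
      have himg : phiM i f ∈ Algebra.adjoin ℤ
          (phiM i '' Set.range fun j : Fin n => (X j : MvPolynomial (Fin n) ℤ) - X i) := by
        rw [Algebra.adjoin_image]
        exact ⟨f, h, rfl⟩
      refine Algebra.adjoin_le ?_ himg
      rintro _ ⟨_, ⟨j, rfl⟩, rfl⟩
      rcases eq_or_ne j i with rfl | hj
      · simp only [sub_self, map_zero]
        exact Subalgebra.zero_mem _
      · rw [map_sub, phiM_X, phiM_X, if_neg hj, if_pos rfl, add_sub_cancel_right]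
        rw [supported_eq_adjoin_X]
        exact Algebra.subset_adjoin ⟨j, hj, rfl⟩
    rw [mem_supported] at hv
    exact (hv hmem) rfl
end

section
/- Let p be an odd prime, n a positive integer, and work in ℚ[c_1,…,c_N] for N large, with derivation D defined on generators by D(c_k) = (n-k+1)c_{k-1} (and c_0 = 1), extended by the Leibniz rule. Assume p ∣ n and that all factors n-p+j (1 ≤ j ≤ (p-1)/2) are nonzero. With A_k = ∏_{j=k}^{(p-1)/2}(n-j)/(n-p+j), define X_1 = c_{(p+1)/2}^2 c_1 - (n/(n-(p+1)/2))·c_{(p+3)/2} c_{(p+1)/2} + 2∑_{k=1}^{(p-1)/2} (-1)^{(p-1)/2-k+1} A_k c_{p-k+1} c_k c_1 + ∑_{k=2}^{(p-1)/2} (-1)^{(p-1)/2-k}(p+2-2k)·(n A_k/(n-p+k-1))·c_{p-k+2} c_k. Then D(X_1) = (-1)^{(p-1)/2}(p+2)·n·A_1·c_p c_1. -/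
/-!
Write `p = 2m + 1`, `hₖ = (-1)^(m-k+1) n Aₖ c_{p-k+1} cₖ` (`quadraticTerm`) and
`gₖ = (-1)^(m-k+1) (n-p+k) Aₖ c_{p-k} cₖ c₁` (`cubicTerm`). Since `(n-p+k) Aₖ = (n-k) A_{k+1}`,
`D` of the `k`-th summand of the first sum is `gₖ - g_{k-1} + hₖ`, and `D` of the `k`-th
summand of the second sum is `eₖ - e_{k-1} - 2hₖ` with `eₖ = (2k-p) hₖ`. Both sums telescope,
and what survives cancels against `D(c_{m+1}² c₁)` and `D(c_{m+2} c_{m+1})` up to `(p+2) h₁`.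
-/

open MvPolynomial Finset

theorem Finset.sum_Ioc_sub_pred {M : Type*} [AddCommGroup M] (f : ℕ → M) {a b : ℕ}
    (hab : a ≤ b) : ∑ k ∈ Ioc a b, (f k - f (k - 1)) = f b - f a := by
  induction b, hab using Nat.le_induction with
  | base => simp
  | succ b hab ih => rw [sum_Ioc_succ_top hab, ih, Nat.add_sub_cancel]; abel

theorem Finset.mul_prod_Icc_div {K : Type*} [Field K] (f g : ℕ → K) {k M : ℕ} (hk : k ≤ M)
    (hg : g k ≠ 0) :
    g k * ∏ j ∈ Icc k M, f j / g j = f k * ∏ j ∈ Icc (k + 1) M, f j / g j := by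
  rw [Icc_eq_cons_Ioc hk, prod_cons, ← Icc_add_one_left_eq_Ioc, ← mul_assoc,
    mul_div_cancel₀ _ hg]

namespace ThreeBoundaries

variable {R : Type*} [CommRing R] [Algebra ℚ R] (n p m : ℕ) (A : ℕ → ℚ) (c : ℕ → R)

def quadraticTerm (k : ℕ) : R :=
  ((-1 : ℚ) ^ (m - k + 1) * n * A k) • (c (p - k + 1) * c k)

def cubicTerm (k : ℕ) : R :=
  ((-1 : ℚ) ^ (m - k + 1) * A k * ((n : ℚ) - p + k)) • (c (p - k) * c k * c 1)

variable {n p m A c} (D : Derivation ℚ R R)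

theorem map_sq_mul_one (hp : p = 2 * m + 1) (hm : 1 ≤ m)
    (hAm : ((n : ℚ) - p + m) * A m = n - m)
    (hD1 : D (c 1) = n) (hD : ∀ k, 1 ≤ k → D (c (k + 1)) = ((n : ℚ) - k) • c k) :
    D (c (m + 1) ^ 2 * c 1) = n * c (m + 1) ^ 2 - 2 * cubicTerm n p m A c m := by
  rw [sq, Derivation.leibniz, Derivation.leibniz, hD1, hD m hm, cubicTerm,
    show p - m = m + 1 by omega, Nat.sub_self, zero_add, pow_one]
  simp only [smul_eq_mul]
  linear_combination (norm := algebra) hAm • (-2 * (c (m + 1) * c m * c 1))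

theorem map_smul_mul_top (hp : p = 2 * m + 1) (hm : 1 ≤ m) (hden : (n : ℚ) - p + m ≠ 0)
    (hAm : ((n : ℚ) - p + m) * A m = n - m)
    (hD : ∀ k, 1 ≤ k → D (c (k + 1)) = ((n : ℚ) - k) • c k) :
    D (((n : ℚ) / ((n : ℚ) - ((m + 1 : ℕ) : ℚ))) • (c (m + 2) * c (m + 1))) =
      n * c (m + 1) ^ 2 - quadraticTerm n p m A c m := by
  have hpm : (n : ℚ) - ((m + 1 : ℕ) : ℚ) = n - p + m := by rw [hp]; push_cast; ring
  have h₁ : (n : ℚ) / (n - ((m + 1 : ℕ) : ℚ)) * (n - ((m + 1 : ℕ) : ℚ)) = n := by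
    rw [hpm]; exact div_mul_cancel₀ _ hden
  have h₂ : (n : ℚ) / (n - ((m + 1 : ℕ) : ℚ)) * (n - m) = n * A m := by
    rw [hpm, ← hAm]; field_simp
  rw [D.map_smul, Derivation.leibniz, hD (m + 1) (by omega), hD m hm, quadraticTerm,
    show p - m + 1 = m + 2 by omega, Nat.sub_self, zero_add, pow_one]
  simp only [smul_eq_mul]
  linear_combination (norm := algebra) h₁ • (c (m + 1) * c (m + 1)) + h₂ • (c (m + 2) * c m)

theorem map_cubic_one (hp : p = 2 * m + 1) (hm : 1 ≤ m)
    (hD1 : D (c 1) = n) (hD : ∀ k, 1 ≤ k → D (c (k + 1)) = ((n : ℚ) - k) • c k) :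
    D (((-1 : ℚ) ^ (m - 1 + 1) * A 1) • (c (p - 1 + 1) * c 1 * c 1)) =
      cubicTerm n p m A c 1 + 2 * quadraticTerm n p m A c 1 := by
  have hcast : (n : ℚ) - ((p - 1 : ℕ) : ℚ) = n - p + ((1 : ℕ) : ℚ) := by
    rw [Nat.cast_sub (by omega)]; ring
  rw [D.map_smul, Derivation.leibniz, Derivation.leibniz, hD1, hD (p - 1) (by omega), hcast,
    cubicTerm, quadraticTerm]
  simp only [smul_eq_mul]
  algebra

theorem map_cubic_succ (hp : p = 2 * m + 1) {j : ℕ} (hj : 1 ≤ j) (hjm : j + 1 ≤ m)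
    (hrec : ((n : ℚ) - p + j) * A j = (n - j) * A (j + 1))
    (hD1 : D (c 1) = n) (hD : ∀ k, 1 ≤ k → D (c (k + 1)) = ((n : ℚ) - k) • c k) :
    D (((-1 : ℚ) ^ (m - (j + 1) + 1) * A (j + 1)) • (c (p - (j + 1) + 1) * c (j + 1) * c 1)) =
      cubicTerm n p m A c (j + 1) - cubicTerm n p m A c j
        + quadraticTerm n p m A c (j + 1) := by
  have hcast : (n : ℚ) - ((p - (j + 1) : ℕ) : ℚ) = n - p + ((j + 1 : ℕ) : ℚ) := by
    rw [Nat.cast_sub (by omega)]; ring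
  rw [D.map_smul, Derivation.leibniz, Derivation.leibniz, hD1, hD (p - (j + 1)) (by omega),
    hD j hj, hcast, cubicTerm, cubicTerm, quadraticTerm, show p - (j + 1) + 1 = p - j by omega,
    show m - j + 1 = m - (j + 1) + 1 + 1 by omega, pow_succ]
  simp only [smul_eq_mul]
  linear_combination (norm := algebra)
    hrec • (-(-1 : ℚ) ^ (m - (j + 1) + 1) • (c (p - j) * c j * c 1))

theorem map_quadratic_succ (hp : p = 2 * m + 1) {j : ℕ} (hj : 1 ≤ j) (hjm : j + 1 ≤ m)
    (hden : (n : ℚ) - p + j ≠ 0) (hrec : ((n : ℚ) - p + j) * A j = (n - j) * A (j + 1))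
    (hD : ∀ k, 1 ≤ k → D (c (k + 1)) = ((n : ℚ) - k) • c k) :
    D (((-1 : ℚ) ^ (m - (j + 1)) * ((p : ℚ) + 2 - 2 * ((j + 1 : ℕ) : ℚ)) *
          ((n : ℚ) * A (j + 1) / ((n : ℚ) - p + ((j + 1 : ℕ) : ℚ) - 1))) •
        (c (p - (j + 1) + 2) * c (j + 1))) =
      ((2 * ((j + 1 : ℕ) : ℚ)) - p) • quadraticTerm n p m A c (j + 1)
        - ((2 * (j : ℚ)) - p) • quadraticTerm n p m A c j
        - 2 * quadraticTerm n p m A c (j + 1) := by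
  have hcast : (n : ℚ) - ((p - j : ℕ) : ℚ) = n - p + j := by
    rw [Nat.cast_sub (by omega)]; ring
  set s : ℚ := (-1) ^ (m - (j + 1))
  have hq : s * ((p : ℚ) + 2 - 2 * ((j + 1 : ℕ) : ℚ)) *
      ((n : ℚ) * A (j + 1) / ((n : ℚ) - p + ((j + 1 : ℕ) : ℚ) - 1)) =
      s * (p - 2 * j) * n * A (j + 1) / (n - p + j) := by
    push_cast; ring
  have h₁ : s * ((p : ℚ) + 2 - 2 * ((j + 1 : ℕ) : ℚ)) *
      ((n : ℚ) * A (j + 1) / ((n : ℚ) - p + ((j + 1 : ℕ) : ℚ) - 1)) * (n - p + j) =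
      s * (p - 2 * j) * n * A (j + 1) := by
    rw [hq, div_mul_cancel₀ _ hden]
  have h₂ : s * ((p : ℚ) + 2 - 2 * ((j + 1 : ℕ) : ℚ)) *
      ((n : ℚ) * A (j + 1) / ((n : ℚ) - p + ((j + 1 : ℕ) : ℚ) - 1)) * (n - j) =
      s * (p - 2 * j) * n * A j := by
    rw [hq, div_mul_eq_mul_div, div_eq_iff hden]
    linear_combination (-(s * (p - 2 * j) * n)) * hrec
  rw [D.map_smul, Derivation.leibniz, show p - (j + 1) + 2 = p - j + 1 by omega,
    hD (p - j) (by omega), hD j hj, hcast, quadraticTerm, quadraticTerm,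
    show p - (j + 1) + 1 = p - j by omega, show m - j + 1 = m - (j + 1) + 1 + 1 by omega,
    pow_succ, pow_succ]
  simp only [smul_eq_mul]
  linear_combination (norm := algebra) h₁ • (c (p - j) * c (j + 1)) + h₂ • (c (p - j + 1) * c j)

theorem map_boundary (hp : p = 2 * m + 1) (hm : 1 ≤ m)
    (hden : ∀ j, 1 ≤ j → j ≤ m → (n : ℚ) - p + j ≠ 0)
    (hrec : ∀ j, 1 ≤ j → j ≤ m → ((n : ℚ) - p + j) * A j = (n - j) * A (j + 1))
    (hAm : A (m + 1) = 1)
    (hD1 : D (c 1) = n) (hD : ∀ k, 1 ≤ k → D (c (k + 1)) = ((n : ℚ) - k) • c k) :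
    D (c (m + 1) ^ 2 * c 1
        - ((n : ℚ) / ((n : ℚ) - ((m + 1 : ℕ) : ℚ))) • (c (m + 2) * c (m + 1))
        + 2 * ∑ k ∈ Icc 1 m, ((-1 : ℚ) ^ (m - k + 1) * A k) • (c (p - k + 1) * c k * c 1)
        + ∑ k ∈ Icc 2 m, ((-1 : ℚ) ^ (m - k) * ((p : ℚ) + 2 - 2 * k) *
            ((n : ℚ) * A k / ((n : ℚ) - p + k - 1))) • (c (p - k + 2) * c k)) =
      ((-1 : ℚ) ^ m * ((p : ℚ) + 2) * n * A 1) • (c p * c 1) := by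
  have hAm' : ((n : ℚ) - p + m) * A m = n - m := by rw [hrec m hm le_rfl, hAm, mul_one]
  have h₃ : D (∑ k ∈ Icc 1 m, ((-1 : ℚ) ^ (m - k + 1) * A k) • (c (p - k + 1) * c k * c 1)) =
      cubicTerm n p m A c m + 2 * quadraticTerm n p m A c 1
        + ∑ k ∈ Ioc 1 m, quadraticTerm n p m A c k := by
    rw [map_sum, Icc_eq_cons_Ioc hm, sum_cons, map_cubic_one D hp hm hD1 hD,
      sum_congr rfl (g := fun k => (cubicTerm n p m A c k - cubicTerm n p m A c (k - 1)) +
        quadraticTerm n p m A c k), sum_add_distrib, sum_Ioc_sub_pred _ hm]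
    · abel
    · intro k hk
      rw [mem_Ioc] at hk
      obtain ⟨j, rfl⟩ : ∃ j, k = j + 1 := ⟨k - 1, by omega⟩
      rw [Nat.add_sub_cancel]
      exact map_cubic_succ D hp (by omega) hk.2 (hrec j (by omega) (by omega)) hD1 hD
  have h₄ : D (∑ k ∈ Icc 2 m, ((-1 : ℚ) ^ (m - k) * ((p : ℚ) + 2 - 2 * k) *
            ((n : ℚ) * A k / ((n : ℚ) - p + k - 1))) • (c (p - k + 2) * c k)) =
      ((2 * (m : ℚ)) - p) • quadraticTerm n p m A c m
        - ((2 * ((1 : ℕ) : ℚ)) - p) • quadraticTerm n p m A c 1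
        - 2 * ∑ k ∈ Ioc 1 m, quadraticTerm n p m A c k := by
    let e : ℕ → R := fun k => ((2 * (k : ℚ)) - p) • quadraticTerm n p m A c k
    rw [map_sum, show Icc 2 m = Ioc 1 m from Icc_add_one_left_eq_Ioc 1 m,
      sum_congr rfl (g := fun k => (e k - e (k - 1)) - 2 * quadraticTerm n p m A c k),
      sum_sub_distrib, sum_Ioc_sub_pred e hm, mul_sum]
    intro k hk
    rw [mem_Ioc] at hk
    obtain ⟨j, rfl⟩ : ∃ j, k = j + 1 := ⟨k - 1, by omega⟩
    rw [Nat.add_sub_cancel]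
    exact map_quadratic_succ D hp (by omega) hk.2 (hden j (by omega) (by omega))
      (hrec j (by omega) (by omega)) hD
  have hRHS : ((-1 : ℚ) ^ m * ((p : ℚ) + 2) * n * A 1) • (c p * c 1) =
      ((p : ℚ) + 2) • quadraticTerm n p m A c 1 := by
    rw [quadraticTerm, Nat.sub_add_cancel hm, Nat.sub_add_cancel (by omega), smul_smul]
    congr 1
    ring
  rw [map_add, map_add, map_sub, two_mul, map_add, ← two_mul, h₃, h₄, hRHS,
    map_sq_mul_one D hp hm hAm' hD1 hD, map_smul_mul_top D hp hm (hden m hm le_rfl) hAm' hD]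
  subst hp
  algebra

end ThreeBoundaries

theorem stmt_10_general (p n : ℕ) (hp : p.Prime) (hodd : Odd p)
    (hden : ∀ j : ℕ, 1 ≤ j → j ≤ (p - 1) / 2 → ((n : ℚ) - p + j) ≠ 0)
    (A : ℕ → ℚ)
    (hA : ∀ k : ℕ, A k = ∏ j ∈ Finset.Icc k ((p - 1) / 2),
      ((n : ℚ) - j) / ((n : ℚ) - p + j))
    (D : Derivation ℚ (MvPolynomial ℕ ℚ) (MvPolynomial ℕ ℚ))
    (hD1 : D (X 1) = C (n : ℚ))
    (hDk : ∀ k : ℕ, 2 ≤ k → D (X k) = C ((n : ℚ) - k + 1) * X (k - 1)) :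
    D (X ((p + 1) / 2) ^ 2 * X 1
        - C ((n : ℚ) / ((n : ℚ) - ((p + 1) / 2 : ℕ))) * (X ((p + 3) / 2) * X ((p + 1) / 2))
        + 2 * ∑ k ∈ Finset.Icc 1 ((p - 1) / 2),
            C ((-1 : ℚ) ^ ((p - 1) / 2 - k + 1) * A k) * (X (p - k + 1) * X k * X 1)
        + ∑ k ∈ Finset.Icc 2 ((p - 1) / 2),
            C ((-1 : ℚ) ^ ((p - 1) / 2 - k) * ((p : ℚ) + 2 - 2 * k) *
                ((n : ℚ) * A k / ((n : ℚ) - p + k - 1))) * (X (p - k + 2) * X k)) =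
      C ((-1 : ℚ) ^ ((p - 1) / 2) * ((p : ℚ) + 2) * n * A 1) * (X p * X 1) := by
  obtain ⟨m, hpm⟩ := hodd
  have hm : 1 ≤ m := by have := hp.two_le; omega
  rw [show (p - 1) / 2 = m by omega] at hden hA ⊢
  rw [show (p + 1) / 2 = m + 1 by omega, show (p + 3) / 2 = m + 2 by omega]
  have hrec : ∀ j, 1 ≤ j → j ≤ m → ((n : ℚ) - p + j) * A j = (n - j) * A (j + 1) := by
    intro j hj hjm
    rw [hA, hA]
    exact mul_prod_Icc_div (fun j : ℕ => (n : ℚ) - j) (fun j : ℕ => (n : ℚ) - p + j) hjm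
      (hden j hj hjm)
  have hAm : A (m + 1) = 1 := by rw [hA]; simp
  have hD : ∀ k, 1 ≤ k → D (X (k + 1)) = ((n : ℚ) - k) • X k := by
    intro k hk
    rw [hDk (k + 1) (by omega), C_mul', Nat.add_sub_cancel]
    congr 1
    push_cast
    ring
  simpa only [C_mul'] using ThreeBoundaries.map_boundary D hpm hm hden hrec hAm
    (by rw [hD1, map_natCast]) hD

/-- First formula of the "three boundaries" lemma: with `D` the derivation on `ℚ[c₁,c₂,…]`
given by `D(cₖ) = (n-k+1)c_{k-1}`, `c₀ = 1`, and `Aₖ = ∏_{j=k}^{(p-1)/2}(n-j)/(n-p+j)`,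
the element `X₁` satisfies `D(X₁) = (-1)^{(p-1)/2}(p+2)·n·A₁·c_p c₁`.
The variable `X k` of `ℚ[X₁,X₂,…]` stands for `cₖ`. -/
theorem stmt_10 (p n : ℕ) (hp : p.Prime) (hodd : Odd p) (hn : 0 < n) (hpn : p ∣ n)
    (hden : ∀ j : ℕ, 1 ≤ j → j ≤ (p - 1) / 2 → ((n : ℚ) - p + j) ≠ 0)
    (A : ℕ → ℚ)
    (hA : ∀ k : ℕ, A k = ∏ j ∈ Finset.Icc k ((p - 1) / 2),
      ((n : ℚ) - j) / ((n : ℚ) - p + j))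
    (D : Derivation ℚ (MvPolynomial ℕ ℚ) (MvPolynomial ℕ ℚ))
    (hD1 : D (X 1) = C (n : ℚ))
    (hDk : ∀ k : ℕ, 2 ≤ k → D (X k) = C ((n : ℚ) - k + 1) * X (k - 1)) :
    D (X ((p + 1) / 2) ^ 2 * X 1
        - C ((n : ℚ) / ((n : ℚ) - ((p + 1) / 2 : ℕ))) * (X ((p + 3) / 2) * X ((p + 1) / 2))
        + 2 * ∑ k ∈ Finset.Icc 1 ((p - 1) / 2),
            C ((-1 : ℚ) ^ ((p - 1) / 2 - k + 1) * A k) * (X (p - k + 1) * X k * X 1)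
        + ∑ k ∈ Finset.Icc 2 ((p - 1) / 2),
            C ((-1 : ℚ) ^ ((p - 1) / 2 - k) * ((p : ℚ) + 2 - 2 * k) *
                ((n : ℚ) * A k / ((n : ℚ) - p + k - 1))) * (X (p - k + 2) * X k)) =
      C ((-1 : ℚ) ^ ((p - 1) / 2) * ((p : ℚ) + 2) * n * A 1) * (X p * X 1) :=
  stmt_10_general p n hp hodd hden A hA D hD1 hDk
end

section
/- Let p be an odd prime, n a positive integer, and D the derivation on ℚ[c_1,c_2,…] with D(c_k) = (n-k+1)c_{k-1}, c_0=1. Assume the denominators n-p-2+j (3 ≤ j ≤ (p+1)/2) are nonzero and set B_k = ∏_{j=k}^{(p+1)/2}(n-j)/(n-p-2+j). Define X_2 = c_{(p+3)/2}^2 + ∑_{k=3}^{(p+1)/2} (-1)^{(p+1)/2-k+1}·2B_k·c_{p-k+3} c_k. Then D(X_2) = (-1)^{(p+1)/2}·2·B_3·(n-2)·c_p c_2. -/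
/-!
Write `m = (p+1)/2`, so `p + 2 = 2m + 1`, and `hₖ = 2 B_{k+1} (n-k) c_{p+2-k} cₖ`.
By the Leibniz rule `D(c_{p+3-k} cₖ) = (n-p-2+k) c_{p+2-k} cₖ + (n-k+1) c_{p+3-k} c_{k-1}`, and the
recursion `Bₖ (n-p-2+k) = B_{k+1} (n-k)` turns `D` of the `k`-th summand of `X₂` into
`(-1)^{m-k+1} (hₖ + h_{k-1})`. This alternating sum telescopes to `(-1)^m h₂ - hₘ`, and
`D(c_{m+1}²) = 2 (n-m) c_{m+1} cₘ = hₘ` cancels the last term.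
-/

open MvPolynomial Finset

theorem Finset.sum_Icc_neg_one_pow_mul_add_telescope {R : Type*} [CommRing R] (f : ℕ → R)
    {a m : ℕ} (ham : a ≤ m) :
    ∑ k ∈ Icc (a + 1) m, (-1) ^ (m - k + 1) * (f k + f (k - 1)) = (-1) ^ (m - a) * f a - f m := by
  induction m, ham using Nat.le_induction with
  | base => simp
  | succ m ham ih =>
    rw [sum_Icc_succ_top (by omega), Nat.sub_self, Nat.add_sub_cancel,
      Nat.sub_add_comm ham, pow_succ]
    have hsign : ∀ k ∈ Icc (a + 1) m, (-1 : R) ^ (m + 1 - k + 1) * (f k + f (k - 1))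
        = -((-1) ^ (m - k + 1) * (f k + f (k - 1))) := by
      intro k hk
      rw [Nat.sub_add_comm (mem_Icc.1 hk).2, pow_succ]
      ring
    rw [sum_congr rfl hsign, sum_neg_distrib, ih]
    ring

theorem Finset.prod_Icc_div_mul_denom {K : Type*} [Field K] (f g : ℕ → K) {k m : ℕ}
    (hkm : k ≤ m) (hg : g k ≠ 0) :
    (∏ j ∈ Icc k m, f j / g j) * g k = (∏ j ∈ Icc (k + 1) m, f j / g j) * f k := by
  rw [← insert_Icc_add_one_left_eq_Icc hkm, prod_insert (by simp)]
  field_simp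

theorem Derivation.map_C_mul {R σ : Type*} [CommRing R]
    (D : Derivation R (MvPolynomial σ R) (MvPolynomial σ R)) (c : R) (x : MvPolynomial σ R) :
    D (C c * x) = C c * D x := by
  rw [← smul_eq_C_mul, D.map_smul, smul_eq_C_mul]

noncomputable def telescopingTerm (B : ℕ → ℚ) (n : ℚ) (p k : ℕ) : MvPolynomial ℕ ℚ :=
  C (2 * B (k + 1) * (n - k)) * (X (p + 2 - k) * X k)

section

variable {n : ℚ} {D : Derivation ℚ (MvPolynomial ℕ ℚ) (MvPolynomial ℕ ℚ)}

theorem derivation_X_mul_X (hD : ∀ k : ℕ, 2 ≤ k → D (X k) = C (n - k + 1) * X (k - 1))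
    {a b : ℕ} (ha : 2 ≤ a) (hb : 2 ≤ b) :
    D (X a * X b) = C (n - a + 1) * (X (a - 1) * X b) + C (n - b + 1) * (X a * X (b - 1)) := by
  rw [D.leibniz, smul_eq_mul, smul_eq_mul, hD a ha, hD b hb]
  ring

theorem derivation_C_mul_X_mul_X (hD : ∀ k : ℕ, 2 ≤ k → D (X k) = C (n - k + 1) * X (k - 1))
    {B : ℕ → ℚ} {p k : ℕ} (hk : 2 ≤ k) (hkp : k ≤ p)
    (hrec : B k * (n - p - 2 + k) = B (k + 1) * (n - k)) :
    D (C (2 * B k) * (X (p - k + 3) * X k)) =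
      telescopingTerm B n p k + telescopingTerm B n p (k - 1) := by
  have hidx₁ : p - k + 3 - 1 = p + 2 - k := by omega
  have hidx₂ : p + 2 - (k - 1) = p - k + 3 := by omega
  have hcast₁ : ((p - k + 3 : ℕ) : ℚ) = p - k + 3 := by push_cast [Nat.cast_sub hkp]; ring
  have hcast₂ : ((k - 1 : ℕ) : ℚ) = k - 1 := by push_cast [Nat.cast_sub (by omega : 1 ≤ k)]; ring
  have hrecC := congrArg (C : ℚ → MvPolynomial ℕ ℚ) hrec
  rw [D.map_C_mul, derivation_X_mul_X hD (by omega) hk, telescopingTerm, telescopingTerm,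
    hidx₁, hidx₂, Nat.sub_add_cancel (by omega : 1 ≤ k), hcast₁, hcast₂]
  simp only [map_mul, map_sub, map_add, map_natCast, map_ofNat, map_one] at hrecC ⊢
  linear_combination 2 * (X (p + 2 - k) * X k) * hrecC

theorem derivation_X_sq_add_sum (hD : ∀ k : ℕ, 2 ≤ k → D (X k) = C (n - k + 1) * X (k - 1))
    {B : ℕ → ℚ} {p m : ℕ} (hm : 2 ≤ m) (hpm : p + 1 = 2 * m)
    (hrec : ∀ k, 3 ≤ k → k ≤ m → B k * (n - p - 2 + k) = B (k + 1) * (n - k))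
    (hBtop : B (m + 1) = 1) :
    D (X (m + 1) ^ 2 + ∑ k ∈ Icc 3 m, C ((-1) ^ (m - k + 1) * 2 * B k) * (X (p - k + 3) * X k)) =
      C ((-1) ^ m * 2 * B 3 * (n - 2)) * (X p * X 2) := by
  have hsq : D (X (m + 1) ^ 2) = telescopingTerm B n p m := by
    rw [sq, D.leibniz, smul_eq_mul, hD _ (by omega), telescopingTerm, hBtop,
      show p + 2 - m = m + 1 by omega, Nat.add_sub_cancel, Nat.cast_add_one,
      show n - (m + 1) + 1 = n - m by ring, mul_one, map_mul, map_ofNat]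
    ring
  have hterm : ∀ k ∈ Icc 3 m, D (C ((-1) ^ (m - k + 1) * 2 * B k) * (X (p - k + 3) * X k)) =
      (-1) ^ (m - k + 1) * (telescopingTerm B n p k + telescopingTerm B n p (k - 1)) := by
    intro k hk
    obtain ⟨hk3, hkm⟩ := mem_Icc.1 hk
    rw [mul_assoc, C_mul, mul_assoc, D.map_C_mul,
      derivation_C_mul_X_mul_X hD (by omega) (by omega) (hrec k hk3 hkm)]
    simp
  have hsign : (-1 : ℚ) ^ m = (-1) ^ (m - 2) := by
    rw [← Nat.sub_add_cancel hm, pow_add, Nat.add_sub_cancel]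
    simp
  rw [map_add, map_sum, sum_congr rfl hterm, hsq, sum_Icc_neg_one_pow_mul_add_telescope _ hm,
    add_sub_cancel, telescopingTerm, Nat.add_sub_cancel]
  simp only [hsign, map_mul, map_pow, map_neg, map_one, Nat.cast_ofNat]
  ring

end

theorem stmt_11_general (p n : ℕ) (hp : p.Prime) (hodd : Odd p)
    (hden : ∀ j : ℕ, 3 ≤ j → j ≤ (p + 1) / 2 → ((n : ℚ) - p - 2 + j) ≠ 0)
    (B : ℕ → ℚ)
    (hB : ∀ k : ℕ, B k = ∏ j ∈ Finset.Icc k ((p + 1) / 2),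
      ((n : ℚ) - j) / ((n : ℚ) - p - 2 + j))
    (D : Derivation ℚ (MvPolynomial ℕ ℚ) (MvPolynomial ℕ ℚ))
    (hDk : ∀ k : ℕ, 2 ≤ k → D (X k) = C ((n : ℚ) - k + 1) * X (k - 1)) :
    D (X ((p + 3) / 2) ^ 2
        + ∑ k ∈ Finset.Icc 3 ((p + 1) / 2),
            C ((-1 : ℚ) ^ ((p + 1) / 2 - k + 1) * 2 * B k) * (X (p - k + 3) * X k)) =
      C ((-1 : ℚ) ^ ((p + 1) / 2) * 2 * B 3 * ((n : ℚ) - 2)) * (X p * X 2) := by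
  have hp2 := hp.two_le
  obtain ⟨t, rfl⟩ := hodd
  rw [show (2 * t + 1 + 3) / 2 = (2 * t + 1 + 1) / 2 + 1 by omega]
  refine derivation_X_sq_add_sum hDk (by omega) (by omega) (fun k hk3 hkm => ?_) ?_
  · rw [hB, hB, prod_Icc_div_mul_denom _ _ hkm (hden k hk3 hkm)]
  · rw [hB, Icc_eq_empty (by omega), prod_empty]

/-- Second formula of the "three boundaries" lemma: with `D` the derivation on `ℚ[c₁,c₂,…]`
given by `D(cₖ) = (n-k+1)c_{k-1}`, `c₀ = 1`, and `Bₖ = ∏_{j=k}^{(p+1)/2}(n-j)/(n-p-2+j)`,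
the element `X₂ = c_{(p+3)/2}² + ∑_{k=3}^{(p+1)/2} (-1)^{(p+1)/2-k+1}·2Bₖ·c_{p-k+3}cₖ`
satisfies `D(X₂) = (-1)^{(p+1)/2}·2·B₃·(n-2)·c_p c₂`. -/
theorem stmt_11 (p n : ℕ) (hp : p.Prime) (hodd : Odd p) (hn : 0 < n)
    (hden : ∀ j : ℕ, 3 ≤ j → j ≤ (p + 1) / 2 → ((n : ℚ) - p - 2 + j) ≠ 0)
    (B : ℕ → ℚ)
    (hB : ∀ k : ℕ, B k = ∏ j ∈ Finset.Icc k ((p + 1) / 2),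
      ((n : ℚ) - j) / ((n : ℚ) - p - 2 + j))
    (D : Derivation ℚ (MvPolynomial ℕ ℚ) (MvPolynomial ℕ ℚ))
    (hD1 : D (X 1) = C (n : ℚ))
    (hDk : ∀ k : ℕ, 2 ≤ k → D (X k) = C ((n : ℚ) - k + 1) * X (k - 1)) :
    D (X ((p + 3) / 2) ^ 2
        + ∑ k ∈ Finset.Icc 3 ((p + 1) / 2),
            C ((-1 : ℚ) ^ ((p + 1) / 2 - k + 1) * 2 * B k) * (X (p - k + 3) * X k)) =
      C ((-1 : ℚ) ^ ((p + 1) / 2) * 2 * B 3 * ((n : ℚ) - 2)) * (X p * X 2) :=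
  stmt_11_general p n hp hodd hden B hB D hDk
end
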